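/- Let n ≥ 1 and s ≤ n. Any subset of the grid H_n = {0,…,n−1} × {0,…,n−1} that is a union of s stack-paths has at most Σ_{i=0}^{s−1}(2n − 1 − 2i) = 2ns − s² points, and this bound is attained: there exist s pairwise disjoint stack-paths in H_n whose union has exactly 2ns − s² points. -/

import Mathlib

/-!
A stack-path meets every diagonal `{p | p.1 - p.2 = d}` in at most one point, so a union of
`s` stack-paths meets it in at most `s` points, and also in at most as many points as the
diagonal has in `H_n`. The union of the first `s` hooks `{p ∈ H_n | min p.1 p.2 = i}`, `i < s`,
meets every diagonal in exactly that many points, since the hook index increases by one along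
a diagonal. Hence no union of `s` stack-paths is larger than these `s` hooks, which are disjoint
stack-paths covering `H_n \ [s, n)²`, a set of `n² - (n - s)² = 2ns - s²` points.
-/

namespace MixedPaper

/-- A queue-path: any two of its points are comparable in the componentwise order. -/
def IsQueuePath (P : Set (ℤ × ℤ)) : Prop :=
  ∀ p ∈ P, ∀ p' ∈ P, (p.1 ≤ p'.1 ∧ p.2 ≤ p'.2) ∨ (p'.1 ≤ p.1 ∧ p'.2 ≤ p.2)

/-- A stack-path: any two of its points are comparable in the order that is
increasing in the first and decreasing in the second coordinate. -/
def IsStackPath (P : Set (ℤ × ℤ)) : Prop :=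
  ∀ p ∈ P, ∀ p' ∈ P, (p.1 ≤ p'.1 ∧ p'.2 ≤ p.2) ∨ (p'.1 ≤ p.1 ∧ p.2 ≤ p'.2)

/-- The grid `H_n = {0,…,n-1} × {0,…,n-1} ⊆ ℤ²`. -/
def gridH (n : ℕ) : Set (ℤ × ℤ) :=
  {p | 0 ≤ p.1 ∧ p.1 < n ∧ 0 ≤ p.2 ∧ p.2 < n}

end MixedPaper

open Finset

theorem Finset.card_le_card_of_forall_card_filter_le {α β : Type*} [DecidableEq β] {f : α → β}
    {s t : Finset α} (h : ∀ b, #{a ∈ s | f a = b} ≤ #{a ∈ t | f a = b}) : #s ≤ #t := by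
  classical
  have hs : ∀ a ∈ s, f a ∈ (s ∪ t).image f := fun a ha => mem_image_of_mem f (mem_union_left t ha)
  have ht : ∀ a ∈ t, f a ∈ (s ∪ t).image f := fun a ha => mem_image_of_mem f (mem_union_right s ha)
  rw [card_eq_sum_card_fiberwise hs, card_eq_sum_card_fiberwise ht]
  exact sum_le_sum fun b _ => h b

theorem Finset.card_le_card_of_forall_subsingleton_inter {α ι : Type*} [Fintype ι]
    {A : Finset α} {S : ι → Set α} (hA : ∀ a ∈ A, ∃ i, a ∈ S i)
    (hS : ∀ i, (S i ∩ A).Subsingleton) : #A ≤ Fintype.card ι := by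
  classical
  calc #A ≤ #(univ.biUnion fun i => {a ∈ A | a ∈ S i}) := by
        refine card_le_card fun a ha => ?_
        obtain ⟨i, hi⟩ := hA a ha
        exact mem_biUnion.2 ⟨i, mem_univ i, mem_filter.2 ⟨ha, hi⟩⟩
    _ ≤ ∑ i, #{a ∈ A | a ∈ S i} := card_biUnion_le
    _ ≤ ∑ _i : ι, 1 := sum_le_sum fun i _ => card_le_one.2 fun a ha b hb => by
        rw [mem_filter] at ha hb
        exact hS i ⟨ha.2, ha.1⟩ ⟨hb.2, hb.1⟩
    _ = Fintype.card ι := by simp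

namespace MixedPaper

theorem IsStackPath.injOn_sub {P : Set (ℤ × ℤ)} (hP : IsStackPath P) :
    P.InjOn fun p => p.1 - p.2 := by
  intro p hp p' hp' h
  have := hP p hp p' hp'
  simp only at h
  ext <;> omega

theorem gridH_eq_coe (n : ℕ) : gridH n = ↑(Ico 0 (n : ℤ) ×ˢ Ico 0 (n : ℤ)) := by
  ext p
  simp only [gridH, coe_product, coe_Ico, Set.mem_prod, Set.mem_Ico, Set.mem_ofPred_eq, and_assoc]

/-- The union of the hooks `hook n i`, `i < s`, written as `H_n \ [s, n)²`. -/
noncomputable def hooks (n s : ℕ) : Finset (ℤ × ℤ) :=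
  (Ico 0 (n : ℤ) ×ˢ Ico 0 (n : ℤ)) \ (Ico (s : ℤ) n ×ˢ Ico (s : ℤ) n)

theorem mem_hooks {n s : ℕ} {p : ℤ × ℤ} :
    p ∈ hooks n s ↔ p ∈ gridH n ∧ min p.1 p.2 < s := by
  simp only [hooks, mem_sdiff, mem_product, mem_Ico, gridH, Set.mem_ofPred_eq]
  omega

theorem card_hooks {n s : ℕ} (hs : s ≤ n) : (#(hooks n s) : ℤ) = 2 * n * s - s ^ 2 := by
  have hsub : Ico (s : ℤ) n ×ˢ Ico (s : ℤ) n ⊆ Ico 0 (n : ℤ) ×ˢ Ico 0 (n : ℤ) :=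
    product_subset_product (Ico_subset_Ico (by omega) le_rfl) (Ico_subset_Ico (by omega) le_rfl)
  have hn : #(Ico 0 (n : ℤ)) = n := by simp
  have hns : #(Ico (s : ℤ) n) = n - s := by rw [Int.card_Ico]; omega
  rw [hooks, card_sdiff_of_subset hsub, card_product, card_product, hn, hns,
    Nat.cast_sub (Nat.mul_le_mul (Nat.sub_le n s) (Nat.sub_le n s)), Nat.cast_mul, Nat.cast_mul,
    Nat.cast_sub hs]
  ring

theorem card_le_card_hooks_filter_sub_eq {n s : ℕ} {d : ℤ} {A : Finset (ℤ × ℤ)}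
    (hA : ↑A ⊆ gridH n) (hAd : ∀ p ∈ A, p.1 - p.2 = d) (hAs : #A ≤ s) :
    #A ≤ #{p ∈ hooks n s | p.1 - p.2 = d} := by
  -- On the diagonal, `H_n` has the first coordinates `[max 0 d, min n (n + d))`, and the hooks
  -- take the first `s` of them.
  have hA_le : #A ≤ #(Ico (max 0 d) (min (n : ℤ) (n + d))) := by
    refine card_le_card_of_injOn Prod.fst (fun p hp => ?_) fun p hp p' hp' h => ?_
    · have := hA hp
      have := hAd p hp
      simp only [gridH, Set.mem_ofPred_eq, coe_Ico, Set.mem_Ico] at *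
      omega
    · have := hAd p hp
      have := hAd p' hp'
      ext <;> omega
  have hooks_ge : #(Ico (max 0 d) (min (min (n : ℤ) (n + d)) (max 0 d + s))) ≤
      #{p ∈ hooks n s | p.1 - p.2 = d} := by
    refine card_le_card_of_injOn (fun x => (x, x - d)) (fun x hx => ?_) fun x _ x' _ h => ?_
    · simp only [coe_Ico, Set.mem_Ico, coe_filter, Set.mem_ofPred_eq, mem_hooks, gridH] at hx ⊢
      omega
    · exact congrArg Prod.fst h
  rw [Int.card_Ico] at hA_le hooks_ge
  omega

theorem ncard_iUnion_le_card_hooks {n s : ℕ} (S : Fin s → Set (ℤ × ℤ))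
    (hS : ∀ i, IsStackPath (S i)) (hsub : ⋃ i, S i ⊆ gridH n) :
    (⋃ i, S i).ncard ≤ #(hooks n s) := by
  have hfin : (⋃ i, S i).Finite := (gridH_eq_coe n ▸ finite_toSet _).subset hsub
  rw [Set.ncard_eq_toFinset_card _ hfin]
  refine card_le_card_of_forall_card_filter_le (f := fun p => p.1 - p.2) fun d => ?_
  refine card_le_card_hooks_filter_sub_eq (fun p hp => ?_) (fun p hp => (mem_filter.1 hp).2) ?_
  · exact hsub (hfin.mem_toFinset.1 (mem_filter.1 hp).1)
  · refine (card_le_card_of_forall_subsingleton_inter (S := S) (fun p hp => ?_) fun i =>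
      ?_).trans_eq (Fintype.card_fin s)
    · exact Set.mem_iUnion.1 (hfin.mem_toFinset.1 (mem_filter.1 hp).1)
    · rintro p ⟨hp, hpA⟩ p' ⟨hp', hp'A⟩
      exact (hS i).injOn_sub hp hp' ((mem_filter.1 hpA).2.trans (mem_filter.1 hp'A).2.symm)

def hook (n i : ℕ) : Set (ℤ × ℤ) :=
  {p ∈ gridH n | min p.1 p.2 = i}

theorem isStackPath_hook (n i : ℕ) : IsStackPath (hook n i) := by
  intro p hp p' hp'
  simp only [hook, gridH, Set.mem_ofPred_eq] at hp hp'
  omega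

theorem pairwise_disjoint_hook (n : ℕ) : Pairwise fun i j => Disjoint (hook n i) (hook n j) :=
  fun i j hij => Set.disjoint_left.2 fun p hi hj => hij (by exact_mod_cast hi.2.symm.trans hj.2)

theorem iUnion_hook (n s : ℕ) : ⋃ i : Fin s, hook n i = ↑(hooks n s) := by
  ext p
  simp only [Set.mem_iUnion, hook, Set.mem_ofPred_eq, mem_coe, mem_hooks]
  constructor
  · rintro ⟨i, hp, hi⟩
    exact ⟨hp, hi ▸ Nat.cast_lt.2 i.isLt⟩
  · rintro ⟨hp, hs⟩
    have hp0 : 0 ≤ p.1 ∧ 0 ≤ p.2 := ⟨hp.1, hp.2.2.1⟩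
    refine ⟨⟨(min p.1 p.2).toNat, by omega⟩, hp, ?_⟩
    simp only
    omega

theorem stackPaths_cover_bound_general (n s : ℕ) (hs : s ≤ n) :
    (∀ S : Fin s → Set (ℤ × ℤ), (∀ i, IsStackPath (S i)) → (⋃ i, S i) ⊆ gridH n →
      ((⋃ i, S i).ncard : ℤ) ≤ 2 * n * s - s ^ 2) ∧
    (∃ S : Fin s → Set (ℤ × ℤ), (∀ i, IsStackPath (S i)) ∧ (∀ i, S i ⊆ gridH n) ∧
      (∀ i i' : Fin s, i ≠ i' → Disjoint (S i) (S i')) ∧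
      ((⋃ i, S i).ncard : ℤ) = 2 * n * s - s ^ 2) := by
  refine ⟨fun S hS hsub => ?_, fun i => hook n i, fun i => isStackPath_hook n i,
    fun i => Set.sep_subset _ _, fun i i' h => pairwise_disjoint_hook n (Fin.val_injective.ne h),
    ?_⟩
  · rw [← card_hooks hs]
    exact_mod_cast ncard_iUnion_le_card_hooks S hS hsub
  · rw [iUnion_hook, Set.ncard_coe_finset, card_hooks hs]

/-- For `n ≥ 1` and `s ≤ n`, any subset of the grid `H_n` that is a union
of `s` stack-paths has at most `Σ_{i=0}^{s-1} (2n − 1 − 2i) = 2ns − s²` points, and the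
bound is attained by `s` pairwise disjoint stack-paths in `H_n`. -/
theorem stackPaths_cover_bound (n s : ℕ) (hn : 1 ≤ n) (hs : s ≤ n) :
    (∀ S : Fin s → Set (ℤ × ℤ), (∀ i, IsStackPath (S i)) → (⋃ i, S i) ⊆ gridH n →
      ((⋃ i, S i).ncard : ℤ) ≤ 2 * n * s - s ^ 2) ∧
    (∃ S : Fin s → Set (ℤ × ℤ), (∀ i, IsStackPath (S i)) ∧ (∀ i, S i ⊆ gridH n) ∧
      (∀ i i' : Fin s, i ≠ i' → Disjoint (S i) (S i')) ∧
      ((⋃ i, S i).ncard : ℤ) = 2 * n * s - s ^ 2) :=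
  stackPaths_cover_bound_general n s hs

end MixedPaper
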